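/- arXiv:1503.00134 — 3 statements merged into one kernel-verified Lean document; each statement's English description precedes it below -/
import Mathlib

section
/- The map φ̂(x,y) = (y/(1+x), y(1+x+y)/(x(1+x)²)) on ℝ₊² is conjugate to ψ(x,y) = (y, y/x) via Π̃(x,y) = (x, y/(1+x)); that is, Π̃ ∘ φ̂ = ψ ∘ Π̃ and Π̃ is a bijection of ℝ₊². -/
def Qpos : Set (ℝ × ℝ) := {p | 0 < p.1 ∧ 0 < p.2}

/-- Reduced map of dP₃. -/
noncomputable def phiHat : ℝ × ℝ → ℝ × ℝ :=
  fun p => (p.2 / (1 + p.1), p.2 * (1 + p.1 + p.2) / (p.1 * (1 + p.1) ^ 2))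

noncomputable def psi6 : ℝ × ℝ → ℝ × ℝ := fun p => (p.2, p.2 / p.1)

noncomputable def PiTilde : ℝ × ℝ → ℝ × ℝ := fun p => (p.1, p.2 / (1 + p.1))

def piTildeInv : ℝ × ℝ → ℝ × ℝ := fun p => (p.1, p.2 * (1 + p.1))

-- No `x ≠ 0` needed: on `x = 0` both second coordinates are the junk value `_ / 0 = 0`.
theorem PiTilde_phiHat {p : ℝ × ℝ} (h₁ : 1 + p.1 ≠ 0) (h₂ : 1 + p.1 + p.2 ≠ 0) :
    PiTilde (phiHat p) = psi6 (PiTilde p) := by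
  obtain ⟨x, y⟩ := p
  simp only [PiTilde, phiHat, psi6, Prod.mk.injEq, true_and] at h₁ h₂ ⊢
  rw [one_add_div h₁]
  field_simp

theorem piTildeInv_PiTilde {p : ℝ × ℝ} (h : 1 + p.1 ≠ 0) : piTildeInv (PiTilde p) = p := by
  simp only [piTildeInv, PiTilde, div_mul_cancel₀ _ h]

theorem PiTilde_piTildeInv {p : ℝ × ℝ} (h : 1 + p.1 ≠ 0) : PiTilde (piTildeInv p) = p := by
  simp only [piTildeInv, PiTilde, mul_div_cancel_right₀ _ h]

theorem one_add_fst_ne_zero_of_mem_Qpos {p : ℝ × ℝ} (hp : p ∈ Qpos) : 1 + p.1 ≠ 0 := by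
  have := hp.1
  positivity

theorem mapsTo_PiTilde : Set.MapsTo PiTilde Qpos Qpos := fun _ ⟨hx, hy⟩ =>
  ⟨hx, div_pos hy (by linarith)⟩

theorem mapsTo_piTildeInv : Set.MapsTo piTildeInv Qpos Qpos := fun _ ⟨hx, hy⟩ =>
  ⟨hx, mul_pos hy (by linarith)⟩

theorem bijOn_PiTilde : Set.BijOn PiTilde Qpos Qpos :=
  Set.InvOn.bijOn
    ⟨fun _ hp => piTildeInv_PiTilde (one_add_fst_ne_zero_of_mem_Qpos hp),
      fun _ hp => PiTilde_piTildeInv (one_add_fst_ne_zero_of_mem_Qpos hp)⟩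
    mapsTo_PiTilde mapsTo_piTildeInv

theorem phiHat_conjugate_psi6 :
    (∀ p ∈ Qpos, PiTilde (phiHat p) = psi6 (PiTilde p)) ∧
    Set.BijOn PiTilde Qpos Qpos := by
  refine ⟨fun p ⟨hx, hy⟩ => PiTilde_phiHat (by positivity) (by positivity), bijOn_PiTilde⟩
end

section
/- The map φ̂(x,y) = (y/(1+x), y(1+x+y)/(x(1+x)²)) on ℝ₊² is globally 6-periodic: its sixth iterate is the identity on ℝ₊². -/
/-! Three steps of `phiHat` already invert the first coordinate: `phiHat^[3]` is the map
`(x, y) ↦ (1/x, (1 + x)²/(x y))`, and this map is an involution, so `phiHat^[6] = id`. -/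

noncomputable def phiHatInvol (p : ℝ × ℝ) : ℝ × ℝ :=
  (p.1⁻¹, (1 + p.1) ^ 2 / (p.1 * p.2))

theorem phiHatInvol_phiHatInvol {x y : ℝ} (hx : x ≠ 0) (hx' : 1 + x ≠ 0) :
    phiHatInvol (phiHatInvol (x, y)) = (x, y) := by
  simp only [phiHatInvol, inv_inv, Prod.mk.injEq, true_and]
  rcases eq_or_ne y 0 with rfl | hy
  · simp
  · field_simp
    ring

theorem phiHatInvol_mapsTo : Set.MapsTo phiHatInvol Qpos Qpos := by
  rintro ⟨x, y⟩ ⟨hx, hy⟩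
  exact ⟨inv_pos.mpr hx, by simp only [phiHatInvol]; positivity⟩

theorem phiHat_iterate_two {x y : ℝ} (hx : 0 < x) (hy : 0 < y) :
    phiHat^[2] (x, y) = (y / (x * (1 + x)), (x * (1 + x) + y) / (x ^ 2 * (1 + x))) := by
  simp only [Function.iterate_succ_apply, Function.iterate_zero_apply, phiHat, Prod.mk.injEq]
  have : 1 + x + y ≠ 0 := by positivity
  constructor <;> field_simp

theorem phiHat_iterate_three {p : ℝ × ℝ} (hp : p ∈ Qpos) : phiHat^[3] p = phiHatInvol p := by
  obtain ⟨x, y⟩ := p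
  obtain ⟨hx, hy⟩ := hp
  rw [Function.iterate_succ_apply', phiHat_iterate_two hx hy]
  simp only [phiHat, phiHatInvol, Prod.mk.injEq]
  have : x * (1 + x) + y ≠ 0 := by positivity
  constructor
  · field_simp
  · field_simp
    ring

theorem phiHat_six_periodic : ∀ p ∈ Qpos, phiHat^[6] p = p := by
  rintro ⟨x, y⟩ hp
  calc phiHat^[6] (x, y) = phiHat^[3] (phiHat^[3] (x, y)) :=
        Function.iterate_add_apply _ 3 3 _
    _ = phiHatInvol (phiHatInvol (x, y)) := by
      rw [phiHat_iterate_three hp, phiHat_iterate_three (phiHatInvol_mapsTo hp)]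
    _ = (x, y) := phiHatInvol_phiHatInvol hp.1.ne' (by linarith [hp.1])
end

section
/- Let C_{(1,1)} = {x ∈ ℝ₊⁶ : x₄ = x₃x₅/x₂, x₆ = 2x₂x₅/x₁}, which is invariant under the dP₃ map φ. Then Ī₁(x) = x₂/x₃ + x₃/x₂ and Ī₂(x) = 2x₂²/(x₁x₅) + x₁x₅/x₂² are first integrals of the restriction of φ to C_{(1,1)}: Ī_k(φ(x)) = Ī_k(x) for all x ∈ C_{(1,1)}. -/
noncomputable def phiDP3 : ℝ × ℝ × ℝ × ℝ × ℝ × ℝ → ℝ × ℝ × ℝ × ℝ × ℝ × ℝ :=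
  fun x =>
    match x with
    | (x1, x2, x3, x4, x5, x6) =>
      (x3, x4, x5, x6, (x2 * x4 + x3 * x5) / x1,
        (x1 * x4 * x6 + x2 * x4 * x5 + x3 * x5 ^ 2) / (x1 * x2))

/-- The fiber C₍₁,₁₎ for the dP₃ map. -/
def C11 : Set (ℝ × ℝ × ℝ × ℝ × ℝ × ℝ) :=
  {x | (0 < x.1 ∧ 0 < x.2.1 ∧ 0 < x.2.2.1 ∧ 0 < x.2.2.2.1 ∧ 0 < x.2.2.2.2.1 ∧
        0 < x.2.2.2.2.2) ∧
    x.2.2.2.1 = x.2.2.1 * x.2.2.2.2.1 / x.2.1 ∧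
    x.2.2.2.2.2 = 2 * x.2.1 * x.2.2.2.2.1 / x.1}

noncomputable def Ibar1 : ℝ × ℝ × ℝ × ℝ × ℝ × ℝ → ℝ :=
  fun x => x.2.1 / x.2.2.1 + x.2.2.1 / x.2.1

noncomputable def Ibar2 : ℝ × ℝ × ℝ × ℝ × ℝ × ℝ → ℝ :=
  fun x => 2 * x.2.1 ^ 2 / (x.1 * x.2.2.2.2.1) + x.1 * x.2.2.2.2.1 / x.2.1 ^ 2

/-!
A point of `C11` is determined by its coordinates `(x₁, x₂, x₃, x₅) = (a, b, c, e)`, and in these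
coordinates `φ` acts by `(a, b, c, e) ↦ (c, ce/b, e, 2ce/a)`; since the image satisfies the two
defining relations again, `C11` is invariant. This substitution sends `r = x₂/x₃` to `1/r` and
`s = x₁x₅/x₂²` to `2/s`, while `Ī₁ = r + 1/r` and `Ī₂ = s + 2/s`, and `t + k/t` is unchanged
under `t ↦ k/t`.
-/

noncomputable def c11Point (a b c e : ℝ) : ℝ × ℝ × ℝ × ℝ × ℝ × ℝ :=
  (a, b, c, c * e / b, e, 2 * b * e / a)

theorem c11Point_mem_C11 {a b c e : ℝ} (ha : 0 < a) (hb : 0 < b) (hc : 0 < c) (he : 0 < e) :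
    c11Point a b c e ∈ C11 :=
  ⟨⟨ha, hb, hc, by unfold c11Point; positivity, he, by unfold c11Point; positivity⟩, rfl, rfl⟩

theorem exists_c11Point_of_mem_C11 {x : ℝ × ℝ × ℝ × ℝ × ℝ × ℝ} (hx : x ∈ C11) :
    ∃ a b c e : ℝ, 0 < a ∧ 0 < b ∧ 0 < c ∧ 0 < e ∧ x = c11Point a b c e := by
  obtain ⟨x1, x2, x3, x4, x5, x6⟩ := x
  obtain ⟨⟨h1, h2, h3, -, h5, -⟩, h4, h6⟩ := hx
  dsimp only at h4 h6
  subst h4 h6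
  exact ⟨x1, x2, x3, x5, h1, h2, h3, h5, rfl⟩

theorem phiDP3_c11Point {a b c e : ℝ} (ha : a ≠ 0) (hb : b ≠ 0) (hc : c ≠ 0) (he : e ≠ 0) :
    phiDP3 (c11Point a b c e) = c11Point c (c * e / b) e (2 * c * e / a) := by
  simp only [phiDP3, c11Point, Prod.mk.injEq, true_and]
  refine ⟨?_, ?_, ?_⟩ <;> field_simp <;> ring

theorem div_add_div_div_cancel {K : Type*} [Field K] {k : K} (hk : k ≠ 0) (t : K) :
    k / t + k / (k / t) = t + k / t := by
  rw [div_div_cancel₀ hk, add_comm]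

theorem Ibar1_c11Point (a b c e : ℝ) : Ibar1 (c11Point a b c e) = b / c + 1 / (b / c) := by
  rw [one_div_div]; rfl

theorem Ibar2_c11Point (a b c e : ℝ) :
    Ibar2 (c11Point a b c e) = a * e / b ^ 2 + 2 / (a * e / b ^ 2) := by
  rw [div_div_eq_mul_div, add_comm]; rfl

theorem Ibar1_phiDP3_c11Point {a b c e : ℝ} (ha : a ≠ 0) (hb : b ≠ 0) (hc : c ≠ 0) (he : e ≠ 0) :
    Ibar1 (phiDP3 (c11Point a b c e)) = Ibar1 (c11Point a b c e) := by
  have h : c * e / b / e = 1 / (b / c) := by field_simp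
  rw [phiDP3_c11Point ha hb hc he, Ibar1_c11Point, Ibar1_c11Point, h,
    div_add_div_div_cancel one_ne_zero]

theorem Ibar2_phiDP3_c11Point {a b c e : ℝ} (ha : a ≠ 0) (hb : b ≠ 0) (hc : c ≠ 0) (he : e ≠ 0) :
    Ibar2 (phiDP3 (c11Point a b c e)) = Ibar2 (c11Point a b c e) := by
  have h : c * (2 * c * e / a) / (c * e / b) ^ 2 = 2 / (a * e / b ^ 2) := by field_simp
  rw [phiDP3_c11Point ha hb hc he, Ibar2_c11Point, Ibar2_c11Point, h,
    div_add_div_div_cancel two_ne_zero]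

theorem first_integrals_on_C11 :
    (∀ x ∈ C11, phiDP3 x ∈ C11) ∧
    (∀ x ∈ C11, Ibar1 (phiDP3 x) = Ibar1 x ∧ Ibar2 (phiDP3 x) = Ibar2 x) := by
  constructor
  · intro x hx
    obtain ⟨a, b, c, e, ha, hb, hc, he, rfl⟩ := exists_c11Point_of_mem_C11 hx
    rw [phiDP3_c11Point ha.ne' hb.ne' hc.ne' he.ne']
    exact c11Point_mem_C11 hc (by positivity) he (by positivity)
  · intro x hx
    obtain ⟨a, b, c, e, ha, hb, hc, he, rfl⟩ := exists_c11Point_of_mem_C11 hx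
    exact ⟨Ibar1_phiDP3_c11Point ha.ne' hb.ne' hc.ne' he.ne',
      Ibar2_phiDP3_c11Point ha.ne' hb.ne' hc.ne' he.ne'⟩
end
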